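/- Let b = sqrt(3/8) and define ψ(x) = (x²+b²)³/(2b), ū(x) = x/(x²+b²), and ū_x(x) = (b²−x²)/(x²+b²)². Then for every x ∈ ℝ, (1/(2ψ(x)))·d/dx[ ( x/3 + ū(x)/2 )·ψ(x) ] − 7/3 − ū_x(x) ≤ −1/3. -/

import Mathlib

open Real

noncomputable def b0 : ℝ := Real.sqrt (3/8)

noncomputable def psi (x : ℝ) : ℝ := (x^2 + b0^2)^3 / (2 * b0)

noncomputable def ubar (x : ℝ) : ℝ := x / (x^2 + b0^2)

noncomputable def ubarx (x : ℝ) : ℝ := (b0^2 - x^2) / (x^2 + b0^2)^2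

lemma b0_sq : b0 ^ 2 = 3 / 8 := Real.sq_sqrt (by norm_num)

lemma b0_pos : 0 < b0 := Real.sqrt_pos.mpr (by norm_num)

lemma s_pos (x : ℝ) : 0 < x ^ 2 + (3:ℝ)/8 := by positivity

/-- The damping coefficient `R(1/3, −1, 1/2, x)` of the linearized weighted
`H⁴` estimate is at most `−1/3` for every `x`. -/
theorem damping_H4_estimate :
    ∀ x : ℝ,
      (1 / (2 * psi x)) * deriv (fun y => (y / 3 + ubar y / 2) * psi y) x
        - 7/3 - ubarx x ≤ -1/3 := by
  intro x
  have hb := b0_pos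
  have hbne : b0 ≠ 0 := ne_of_gt hb
  have hfun : (fun y => (y / 3 + ubar y / 2) * psi y)
      = fun y => (y * (y^2 + 3/8)^3 / 3 + y * (y^2 + 3/8)^2 / 2) / (2 * b0) := by
    funext y
    have hs := (s_pos y).ne'
    simp only [ubar, psi, b0_sq]
    field_simp
  rw [hfun]
  -- compute the derivative
  have h1 : HasDerivAt (fun y : ℝ => y^2 + 3/8) (2*x) x := by
    simpa using ((hasDerivAt_pow 2 x).add_const (3/8 : ℝ))
  have h3 : HasDerivAt (fun y : ℝ => (y^2 + 3/8)^3) (3 * (x^2+3/8)^2 * (2*x)) x := by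
    simpa using (h1.fun_pow 3)
  have h2 : HasDerivAt (fun y : ℝ => (y^2 + 3/8)^2) (2 * (x^2+3/8) * (2*x)) x := by
    simpa using (h1.fun_pow 2)
  have hA : HasDerivAt (fun y : ℝ => y * (y^2 + 3/8)^3)
      (1 * (x^2+3/8)^3 + x * (3 * (x^2+3/8)^2 * (2*x))) x :=
    (hasDerivAt_id x).mul h3
  have hB : HasDerivAt (fun y : ℝ => y * (y^2 + 3/8)^2)
      (1 * (x^2+3/8)^2 + x * (2 * (x^2+3/8) * (2*x))) x :=
    (hasDerivAt_id x).mul h2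
  have hF : HasDerivAt
      (fun y : ℝ => (y * (y^2 + 3/8)^3 / 3 + y * (y^2 + 3/8)^2 / 2) / (2 * b0))
      (((1 * (x^2+3/8)^3 + x * (3 * (x^2+3/8)^2 * (2*x))) / 3
        + (1 * (x^2+3/8)^2 + x * (2 * (x^2+3/8) * (2*x))) / 2) / (2 * b0)) x :=
    ((hA.div_const 3).add (hB.div_const 2)).div_const (2 * b0)
  rw [hF.deriv]
  simp only [psi, ubarx, b0_sq]
  set s := x^2 + (3:ℝ)/8 with hsdef
  have hs : (0:ℝ) < s := s_pos x
  have hsne := hs.ne'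
  set A : ℝ := 1 * s^3 + x * (3 * s^2 * (2*x)) with hA'
  set B : ℝ := 1 * s^2 + x * (2 * s * (2*x)) with hB'
  have h0 : 1 / (2 * (s^3 / (2 * b0))) * ((A/3 + B/2) / (2 * b0))
      = (A/3 + B/2) / (2 * s^3) := by
    field_simp
  rw [h0]
  rw [sub_le_iff_le_add, sub_le_iff_le_add, div_le_iff₀ (by positivity)]
  have hq : (3/8 - x^2) / s^2 * s^2 = 3/8 - x^2 :=
    div_mul_cancel₀ _ (pow_ne_zero 2 hsne)
  have key : (0:ℝ) ≤ 5/6 * (x^2)^2 - 5/4 * x^2 + 69/128 := by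
    nlinarith [sq_nonneg (x^2 - 3/4)]
  set q : ℝ := (3/8 - x^2) / s^2
  have hqs : q * s^3 = (3/8 - x^2) * s := by
    have : q * s^3 = (q * s^2) * s := by ring
    rw [this, hq]
  have hkey2 : (0:ℝ) ≤ (5/6 * (x^2)^2 - 5/4 * x^2 + 69/128) * s :=
    mul_nonneg key hs.le
  clear_value q A B s
  clear hq h0 hF hA hB h1 h2 h3 hfun key
  subst hA' hB' hsdef
  nlinarith [hkey2, hqs, hs, sq_nonneg x]
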